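/- Let α ≥ 0 and δ > α + 1 be real numbers, and let r, x : ℕ → ℝ be sequences with r(j) ≥ 0 for all j, δ·r(j) ≤ r(j+1) for all j, x(0) ≤ α·r(0), and x(j+1) ≤ (1+α)·x(j) + α·r(j+1) for all j. Then x(j) ≤ (α·δ/(δ−α−1))·r(j) for all j. (This is the inductive content of Lemma 4: when demands outside each layer are routed by α-approximate shortest paths and the rent costs of successive layers grow by a factor δ going outward, the accumulated rent cost outside each layer is at most αδ/(δ−α−1) times that layer's rent cost.) -/
import Mathlib

/-- Inductive content of Lemma 4 (rent-cost accumulation over layers). -/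
theorem stmt_5 (α δ : ℝ) (hα : 0 ≤ α) (hδ : α + 1 < δ) (r x : ℕ → ℝ)
    (hr : ∀ j, 0 ≤ r j) (hgrow : ∀ j, δ * r j ≤ r (j + 1))
    (hx0 : x 0 ≤ α * r 0) (hxs : ∀ j, x (j + 1) ≤ (1 + α) * x j + α * r (j + 1)) :
    ∀ j, x j ≤ (α * δ / (δ - α - 1)) * r j := by
  have hd : 0 < δ - α - 1 := by linarith
  have hδ0 : 0 < δ := by linarith
  have hC : α ≤ α * δ / (δ - α - 1) := by
    rw [le_div_iff₀ hd]; nlinarith [hr 0]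
  intro j
  induction j with
  | zero =>
    calc x 0 ≤ α * r 0 := hx0
    _ ≤ (α * δ / (δ - α - 1)) * r 0 := by
        apply mul_le_mul_of_nonneg_right _ (hr 0)
        rw [le_div_iff₀ hd]; nlinarith
  | succ j ih =>
    have h1 := hxs j
    have h2 := hgrow j
    have hrj := hr j
    have hrj1 := hr (j + 1)
    have key : (1 + α) * ((α * δ / (δ - α - 1)) * r j) + α * r (j + 1)
        ≤ (α * δ / (δ - α - 1)) * r (j + 1) := by
      rw [div_mul_eq_mul_div, div_mul_eq_mul_div, mul_div_assoc',
        div_add' _ _ _ (ne_of_gt hd), div_le_div_iff₀ hd hd]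
      nlinarith [mul_le_mul_of_nonneg_left h2 (mul_nonneg (by linarith : (0:ℝ) ≤ 1 + α) hα), hd, mul_nonneg hα hrj1]
    have h3 : (1 + α) * x j ≤ (1 + α) * ((α * δ / (δ - α - 1)) * r j) :=
      mul_le_mul_of_nonneg_left ih (by linarith)
    linarith
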